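/- The bound rank_B(I) ≤ rank_B(E(I)) is not tight: there exists a Boolean matrix I with rank_B(I) = 3 and rank_B(E(I)) = 4. Concretely, the 4×5 matrix I with rows (1,0,1,1,1), (0,1,1,0,1), (0,1,0,0,1), (1,0,1,1,0) has Boolean rank 3, while its essential part E(I), which has rows (0,0,0,0,1), (0,0,1,0,0), (0,1,0,0,0), (1,0,0,1,0), has Boolean rank 4. -/

import Mathlib

/-- `C↑`: attributes shared by all objects in `C`. -/
def up {n m : ℕ} (I : Fin n → Fin m → Bool) (C : Finset (Fin n)) : Finset (Fin m) :=
  Finset.univ.filter fun j => ∀ i ∈ C, I i j = true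

/-- `D↓`: objects sharing all attributes in `D`. -/
def dn {n m : ℕ} (I : Fin n → Fin m → Bool) (D : Finset (Fin m)) : Finset (Fin n) :=
  Finset.univ.filter fun i => ∀ j ∈ D, I i j = true

/-- A formal concept of `I`: a pair `⟨C,D⟩` with `C↑ = D` and `D↓ = C`. -/
def isConcept {n m : ℕ} (I : Fin n → Fin m → Bool)
    (p : Finset (Fin n) × Finset (Fin m)) : Prop :=
  up I p.1 = p.2 ∧ dn I p.2 = p.1

/-- The interval `[γ(C), μ(D)]` in the concept lattice of `I`
(concepts ordered by extent inclusion). -/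
def interval {n m : ℕ} (I : Fin n → Fin m → Bool)
    (C : Finset (Fin n)) (D : Finset (Fin m)) :
    Set (Finset (Fin n) × Finset (Fin m)) :=
  {p | isConcept I p ∧ dn I (up I C) ⊆ p.1 ∧ p.1 ⊆ dn I D}

/-- The Boolean matrix `A_F ∘ B_F` determined by a set `F` of concepts:
entry `(i,j)` is 1 iff some concept in `F` covers `(i,j)`. -/
def cov {n m : ℕ} (F : Finset (Finset (Fin n) × Finset (Fin m))) :
    Fin n → Fin m → Bool :=
  fun i j => decide (∃ p ∈ F, i ∈ p.1 ∧ j ∈ p.2)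

/-- The essential part `E(I)`: entry `(i,j)` is 1 iff the interval `I_{ij}` is
non-empty and inclusion-minimal among the non-empty intervals `I_{i'j'}`. -/
noncomputable def Ess {n m : ℕ} (I : Fin n → Fin m → Bool) : Fin n → Fin m → Bool :=
  fun i j =>
    @decide ((interval I {i} {j}).Nonempty ∧
      ∀ (i' : Fin n) (j' : Fin m), (interval I {i'} {j'}).Nonempty →
        interval I {i'} {j'} ⊆ interval I {i} {j} →
        interval I {i'} {j'} = interval I {i} {j})
      (Classical.propDecidable _)

/-- Boolean matrix product. -/
def bmul {n k m : ℕ} (A : Fin n → Fin k → Bool) (B : Fin k → Fin m → Bool) :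
    Fin n → Fin m → Bool := fun i j => decide (∃ l, A i l = true ∧ B l j = true)

/-- The Boolean (Schein) rank: the least `k` admitting a Boolean factorization
with inner dimension `k`. -/
noncomputable def rankB {n m : ℕ} (M : Fin n → Fin m → Bool) : ℕ :=
  sInf {k | ∃ (A : Fin n → Fin k → Bool) (B : Fin k → Fin m → Bool), M = bmul A B}

/-!
`rank_B I ≤ 3` by a cover of the ones of `I` with three rectangles, and `rank_B I ≥ 3` because
the ones at `(0,0)`, `(2,1)`, `(1,2)` form a fooling set: no rectangle inside `I` contains two
of them. The essential part is computed entrywise: the interval `I_{ij}` consists of the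
concepts whose extent lies between `{i}↑↓` and `{j}↓`, so its non-emptiness and the inclusions
between intervals reduce to inclusions between these finitely many extents. The four ones of
`E(I)` at `(0,4)`, `(1,2)`, `(2,1)`, `(3,0)` again form a fooling set, so `rank_B E(I) = 4`.
-/

section Concepts

variable {n m : ℕ} (I : Fin n → Fin m → Bool)

theorem subset_dn_iff_subset_up {C : Finset (Fin n)} {D : Finset (Fin m)} :
    C ⊆ dn I D ↔ D ⊆ up I C := by
  simp only [Finset.subset_iff, up, dn, Finset.mem_filter, Finset.mem_univ, true_and]
  exact ⟨fun h _ hj _ hi => h hi _ hj, fun h _ hi _ hj => h hj _ hi⟩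

theorem galoisConnection_up_dn :
    GaloisConnection (OrderDual.toDual ∘ up I) (dn I ∘ OrderDual.ofDual) :=
  fun _ _ => (subset_dn_iff_subset_up I).symm

theorem up_dn_up (C : Finset (Fin n)) : up I (dn I (up I C)) = up I C :=
  congrArg OrderDual.ofDual ((galoisConnection_up_dn I).l_u_l_eq_l C)

theorem dn_up_dn (D : Finset (Fin m)) : dn I (up I (dn I D)) = dn I D :=
  (galoisConnection_up_dn I).u_l_u_eq_u (OrderDual.toDual D)

theorem isConcept_dn_up_up (C : Finset (Fin n)) : isConcept I (dn I (up I C), up I C) :=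
  ⟨up_dn_up I C, rfl⟩

theorem isConcept_dn_up_dn (D : Finset (Fin m)) : isConcept I (dn I D, up I (dn I D)) :=
  ⟨rfl, dn_up_dn I D⟩

theorem interval_nonempty_iff (C : Finset (Fin n)) (D : Finset (Fin m)) :
    (interval I C D).Nonempty ↔ dn I (up I C) ⊆ dn I D :=
  ⟨fun ⟨_, _, hlo, hhi⟩ => hlo.trans hhi,
    fun h => ⟨_, isConcept_dn_up_up I C, subset_rfl, h⟩⟩

theorem interval_subset_interval_iff {C C' : Finset (Fin n)} {D D' : Finset (Fin m)}
    (hne : (interval I C' D').Nonempty) :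
    interval I C' D' ⊆ interval I C D ↔
      dn I (up I C) ⊆ dn I (up I C') ∧ dn I D' ⊆ dn I D := by
  have hle := (interval_nonempty_iff I C' D').mp hne
  refine ⟨fun hsub => ⟨?_, ?_⟩, ?_⟩
  · exact (hsub ⟨isConcept_dn_up_up I C', subset_rfl, hle⟩).2.1
  · exact (hsub ⟨isConcept_dn_up_dn I D', hle, subset_rfl⟩).2.2
  · rintro ⟨hlo, hhi⟩ p ⟨hp, hlo', hhi'⟩
    exact ⟨hp, hlo.trans hlo', hhi'.trans hhi⟩

/-- The defining condition of `Ess` in terms of the endpoints `{i}↑↓` and `{j}↓` of the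
intervals, which makes it decidable. -/
theorem ess_eq_true_iff (i : Fin n) (j : Fin m) :
    Ess I i j = true ↔
      dn I (up I {i}) ⊆ dn I {j} ∧
        ∀ (i' : Fin n) (j' : Fin m), dn I (up I {i'}) ⊆ dn I {j'} →
          dn I (up I {i}) ⊆ dn I (up I {i'}) ∧ dn I {j'} ⊆ dn I {j} →
          dn I (up I {i'}) ⊆ dn I (up I {i}) ∧ dn I {j} ⊆ dn I {j'} := by
  refine (@decide_eq_true_iff _ (Classical.propDecidable _)).trans ?_
  rw [← interval_nonempty_iff]
  refine and_congr_right fun hne => forall₂_congr fun i' j' => ?_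
  refine imp_congr_ctx (interval_nonempty_iff I _ _) fun hle' => ?_
  have hne' := (interval_nonempty_iff I _ _).mpr hle'
  refine imp_congr_ctx (interval_subset_interval_iff I hne') fun hsub => ?_
  rw [← interval_subset_interval_iff I hne]
  exact ⟨fun h => h.ge, ((interval_subset_interval_iff I hne').mpr hsub).antisymm⟩

end Concepts

section BooleanRank

variable {n m : ℕ}

theorem rankB_le_of_eq_bmul {k : ℕ} {M : Fin n → Fin m → Bool}
    (A : Fin n → Fin k → Bool) (B : Fin k → Fin m → Bool) (h : M = bmul A B) :
    rankB M ≤ k :=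
  Nat.sInf_le ⟨A, B, h⟩

theorem bmul_id_left (M : Fin n → Fin m → Bool) : bmul (fun i l => decide (i = l)) M = M := by
  funext i j
  simp [bmul]

theorem rankB_le_card_rows (M : Fin n → Fin m → Bool) : rankB M ≤ n :=
  rankB_le_of_eq_bmul _ M (bmul_id_left M).symm

/-- Fooling-set bound: a factorization `M = A ∘ B` has inner dimension at least the size of any
family of ones of `M` no two of which span a rectangle of ones. -/
theorem le_of_eq_bmul_of_fooling {k r : ℕ} {M : Fin n → Fin m → Bool}
    {A : Fin n → Fin k → Bool} {B : Fin k → Fin m → Bool} (h : M = bmul A B)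
    (s : Fin r → Fin n × Fin m) (hone : ∀ t, M (s t).1 (s t).2 = true)
    (hfool : ∀ t t', t ≠ t' → M (s t).1 (s t').2 = false ∨ M (s t').1 (s t).2 = false) :
    r ≤ k := by
  subst h
  have hwit : ∀ t, ∃ l, A (s t).1 l = true ∧ B l (s t).2 = true := by
    simpa [bmul] using hone
  choose f hf using hwit
  have hcross : ∀ t t', f t = f t' → bmul A B (s t).1 (s t').2 = true := fun t t' he => by
    simpa [bmul] using ⟨f t, (hf t).1, he ▸ (hf t').2⟩
  have hinj : Function.Injective f := fun t t' he => by
    by_contra hne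
    rcases hfool t t' hne with hc | hc
    · simp [hcross t t' he] at hc
    · simp [hcross t' t he.symm] at hc
  simpa using Fintype.card_le_of_injective f hinj

theorem le_rankB_of_fooling {r : ℕ} {M : Fin n → Fin m → Bool}
    (s : Fin r → Fin n × Fin m) (hone : ∀ t, M (s t).1 (s t).2 = true)
    (hfool : ∀ t t', t ≠ t' → M (s t).1 (s t').2 = false ∨ M (s t').1 (s t).2 = false) :
    r ≤ rankB M :=
  le_csInf ⟨n, _, M, (bmul_id_left M).symm⟩ fun _ ⟨_, _, h⟩ =>
    le_of_eq_bmul_of_fooling h s hone hfool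

end BooleanRank

def exampleMatrix : Fin 4 → Fin 5 → Bool :=
  !![true, false, true,  true,  true;
     false, true, true,  false, true;
     false, true, false, false, true;
     true, false, true,  true,  false]

def exampleEssentialPart : Fin 4 → Fin 5 → Bool :=
  !![false, false, false, false, true;
     false, false, true,  false, false;
     false, true,  false, false, false;
     true,  false, false, true,  false]

theorem rankB_exampleMatrix : rankB exampleMatrix = 3 := by
  refine le_antisymm (rankB_le_of_eq_bmul
    !![true, false, true; false, true, true; false, true, false; true, false, false]
    !![true, false, true, true, false; false, true, false, false, true;
       false, false, true, false, true] (by decide)) ?_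
  exact le_rankB_of_fooling ![(0, 0), (2, 1), (1, 2)] (by decide) (by decide)

theorem ess_exampleMatrix : Ess exampleMatrix = exampleEssentialPart := by
  funext i j
  rw [Bool.eq_iff_iff, ess_eq_true_iff]
  revert i j
  decide

theorem rankB_exampleEssentialPart : rankB exampleEssentialPart = 4 :=
  le_antisymm (rankB_le_card_rows _)
    (le_rankB_of_fooling ![(0, 4), (1, 2), (2, 1), (3, 0)] (by decide) (by decide))

theorem rankB_ess_bound_not_tight :
    ∃ I : Fin 4 → Fin 5 → Bool,
      (∀ i j, I i j = (!![true, false, true,  true,  true;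
                         false, true, true,  false, true;
                         false, true, false, false, true;
                         true, false, true,  true,  false] : Matrix (Fin 4) (Fin 5) Bool) i j) ∧
      rankB I = 3 ∧
      (∀ i j, Ess I i j = (!![false, false, false, false, true;
                              false, false, true,  false, false;
                              false, true,  false, false, false;
                              true,  false, false, true,  false] : Matrix (Fin 4) (Fin 5) Bool) i j) ∧
      rankB (Ess I) = 4 :=
  ⟨exampleMatrix, fun _ _ => rfl, rankB_exampleMatrix,
    fun i j => congrFun₂ ess_exampleMatrix i j,
    ess_exampleMatrix ▸ rankB_exampleEssentialPart⟩
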